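/- arXiv:1107.4810 — 3 statements merged into one kernel-verified Lean document; each statement's English description precedes it below -/
import Mathlib

section
/- For every real number y, |R(i·y)| < 1 if and only if 0 < y² < 8 (equivalently, 0 < |y| < √8); moreover |R(i·y)| = 1 when y = 0 or y² = 8, and |R(i·y)| > 1 when y² > 8. -/
/-! On the imaginary axis `R(iy) = (1 - y²/2 + y⁴/24) + i (y - y³/6)`, and expanding the squared
modulus everything cancels except `|R(iy)|² = 1 + y⁶ (y² - 8) / 576`. Comparing `|R(iy)|` with `1`
is therefore reading off the sign of `(y²)³ (y² - 8)`. -/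

open Complex

/-- The RK4 stability polynomial `R(p) = 1 + p + p²/2 + p³/6 + p⁴/24`. -/
noncomputable def R (p : ℂ) : ℂ := 1 + p + p ^ 2 / 2 + p ^ 3 / 6 + p ^ 4 / 24

lemma R_I_mul_ofReal (y : ℝ) :
    R (I * y) = ⟨1 - y ^ 2 / 2 + y ^ 4 / 24, y - y ^ 3 / 6⟩ := by
  apply Complex.ext <;> simp [R, pow_succ] <;> ring

lemma norm_R_I_mul_ofReal_sq (y : ℝ) :
    ‖R (I * y)‖ ^ 2 = 1 + (y ^ 2) ^ 3 * (y ^ 2 - 8) / 576 := by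
  rw [← normSq_eq_norm_sq, R_I_mul_ofReal, normSq_mk]
  ring

lemma pow_three_mul_sub_neg_iff {t : ℝ} (ht : 0 ≤ t) (c : ℝ) :
    t ^ 3 * (t - c) < 0 ↔ 0 < t ∧ t < c := by
  rcases ht.eq_or_lt with rfl | ht
  · simp
  · rw [mul_neg_iff]
    simp [ht, pow_pos ht, (pow_pos ht 3).not_gt]

lemma norm_R_I_mul_ofReal_lt_one_iff (y : ℝ) :
    ‖R (I * y)‖ < 1 ↔ 0 < y ^ 2 ∧ y ^ 2 < 8 := by
  rw [← pow_three_mul_sub_neg_iff (sq_nonneg y), ← sq_lt_one_iff₀ (norm_nonneg _),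
    norm_R_I_mul_ofReal_sq]
  constructor <;> intro h <;> linarith

lemma one_lt_norm_R_I_mul_ofReal {y : ℝ} (hy : 8 < y ^ 2) : 1 < ‖R (I * y)‖ := by
  have hpos : 0 < (y ^ 2) ^ 3 * (y ^ 2 - 8) :=
    mul_pos (pow_pos (by linarith) 3) (sub_pos.2 hy)
  rw [← one_lt_sq_iff₀ (norm_nonneg _), norm_R_I_mul_ofReal_sq]
  linarith

lemma norm_R_I_mul_ofReal_eq_one {y : ℝ} (hy : y = 0 ∨ y ^ 2 = 8) : ‖R (I * y)‖ = 1 := by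
  rw [← pow_eq_one_iff_of_nonneg (norm_nonneg _) two_ne_zero, norm_R_I_mul_ofReal_sq]
  rcases hy with rfl | hy
  · norm_num
  · simp [hy]

/-- RK4 stability on the imaginary axis: `|R(i·y)| < 1` iff `0 < y² < 8`;
`|R(i·y)| = 1` when `y = 0` or `y² = 8`; and `|R(i·y)| > 1` when `y² > 8`. -/
theorem abs_R_imaginary_stability (y : ℝ) :
    (‖R (Complex.I * (y : ℂ))‖ < 1 ↔ 0 < y ^ 2 ∧ y ^ 2 < 8) ∧
    ((y = 0 ∨ y ^ 2 = 8) → ‖R (Complex.I * (y : ℂ))‖ = 1) ∧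
    (y ^ 2 > 8 → ‖R (Complex.I * (y : ℂ))‖ > 1) :=
  ⟨norm_R_I_mul_ofReal_lt_one_iff y, norm_R_I_mul_ofReal_eq_one, one_lt_norm_R_I_mul_ofReal⟩
end

section
/- Let a > 0 and s, V_b, V_{b−1} be real numbers, and let ψ_b, ψ_{b−1}, d_b, d_{b−1}, ℓ_b, ℓ_{b−1} be complex numbers with ψ_{b−1} ≠ 0. Assume the nonlinear Schrödinger relations i·d_b + a·ℓ_b − V_b·ψ_b + s·|ψ_b|²·ψ_b = 0 and i·d_{b−1} + a·ℓ_{b−1} − V_{b−1}·ψ_{b−1} + s·|ψ_{b−1}|²·ψ_{b−1} = 0 hold, together with the modulus-squared Dirichlet boundary relation d_b = i·Im(d_{b−1}/ψ_{b−1})·ψ_b. Then ℓ_b = [Im(i·ℓ_{b−1}/ψ_{b−1}) + (N_{b−1} − N_b)/a]·ψ_b, where N_b = s·|ψ_b|² − V_b and N_{b−1} = s·|ψ_{b−1}|² − V_{b−1}. -/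
open Complex

/-! Dividing the interior relation by `ψ_{b−1}` gives
`Im(d_{b−1}/ψ_{b−1}) = a·Im(i·ℓ_{b−1}/ψ_{b−1}) + N_{b−1}`, since `N_{b−1}` is real.
At the boundary the MSD condition makes `i·d_b = −Im(d_{b−1}/ψ_{b−1})·ψ_b`, so the
boundary relation solves to `a·ℓ_b = (Im(d_{b−1}/ψ_{b−1}) − N_b)·ψ_b`. -/

theorem im_div_eq_of_schrodinger {a N : ℝ} {ψ d ℓ : ℂ} (hψ : ψ ≠ 0)
    (h : I * d + a * ℓ + N * ψ = 0) :
    (d / ψ).im = a * (I * ℓ / ψ).im + N := by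
  have hdiv : d / ψ = a * (I * ℓ / ψ) + I * N := by
    field_simp
    linear_combination (-I) * h + d * I_sq
  rw [hdiv]
  simp

theorem eq_mul_of_schrodinger_of_eq_I_mul {a N m : ℝ} {ψ d ℓ : ℂ} (ha : a ≠ 0)
    (h : I * d + a * ℓ + N * ψ = 0) (hd : d = I * m * ψ) :
    ℓ = ((m - N) / a : ℝ) * ψ := by
  have ha' : (a : ℂ) ≠ 0 := ofReal_ne_zero.mpr ha
  subst hd
  push_cast
  field_simp
  linear_combination h - m * ψ * I_sq

/-- The modulus-squared Dirichlet (MSD) boundary condition expressed in terms of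
the Laplacian: if the NLSE relations hold at the boundary point `b` and the
adjacent interior point `b−1`, and the MSD time-derivative condition
`d_b = i·Im(d_{b−1}/ψ_{b−1})·ψ_b` holds, then
`ℓ_b = [Im(i·ℓ_{b−1}/ψ_{b−1}) + (N_{b−1} − N_b)/a]·ψ_b`. -/
theorem msd_laplacian (a s Vb Vbm : ℝ) (ha : 0 < a)
    (ψb ψbm db dbm lb lbm : ℂ) (hψbm : ψbm ≠ 0)
    (hb : Complex.I * db + (a : ℂ) * lb - (Vb : ℂ) * ψb
        + (s : ℂ) * ((‖ψb‖ : ℝ) : ℂ) ^ 2 * ψb = 0)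
    (hbm : Complex.I * dbm + (a : ℂ) * lbm - (Vbm : ℂ) * ψbm
        + (s : ℂ) * ((‖ψbm‖ : ℝ) : ℂ) ^ 2 * ψbm = 0)
    (hmsd : db = Complex.I * (((dbm / ψbm).im : ℝ) : ℂ) * ψb) :
    lb = ((((Complex.I * lbm / ψbm).im
            + ((s * (‖ψbm‖) ^ 2 - Vbm) - (s * (‖ψb‖) ^ 2 - Vb)) / a : ℝ)) : ℂ)
          * ψb := by
  have hb' : I * db + a * lb + ((s * ‖ψb‖ ^ 2 - Vb : ℝ) : ℂ) * ψb = 0 := by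
    push_cast; linear_combination hb
  have hbm' : I * dbm + a * lbm + ((s * ‖ψbm‖ ^ 2 - Vbm : ℝ) : ℂ) * ψbm = 0 := by
    push_cast; linear_combination hbm
  rw [eq_mul_of_schrodinger_of_eq_I_mul ha.ne' hb' hmsd, im_div_eq_of_schrodinger hψbm hbm']
  congr 2
  field_simp
  ring
end

section
/- Let a, h, k be positive real numbers with k < (√8/4)·(h²/a), and let N ≥ 1 be a natural number. Then for every j ∈ Fin N, |R(i·k·(a/h²)·(−2 + 2·cos(2πj/N)))| ≤ 1, with strict inequality whenever cos(2πj/N) ≠ 1. (Linearized stability of the RK4 scheme with second-order central differencing and periodic boundary conditions for the linear Schrödinger equation i∂Ψ/∂t + a∇²Ψ = 0 in one dimension.) -/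
/-!
On the imaginary axis `|R(iy)|² = 1 + y⁶(y² − 8)/576`, so RK4 is stable exactly on
`|y| ≤ √8`, strictly inside except at `y = 0`. The eigenvalues `−2 + 2 cos θ` of the
periodic Laplacian lie in `[−4, 0]`, so `k a / h² < √8/4` puts every `p = k λ` on the
segment `i·(−√8, 0]`, with `p = 0` exactly when `cos θ = 1`.
-/

open Complex

lemma sq_norm_R_I_mul (y : ℝ) : ‖R (I * y)‖ ^ 2 = 1 + y ^ 6 * (y ^ 2 - 8) / 576 := by
  have hR : R (I * y) = ⟨1 - y ^ 2 / 2 + y ^ 4 / 24, y - y ^ 3 / 6⟩ := by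
    apply Complex.ext <;> simp [R, pow_succ] <;> ring
  rw [hR, Complex.sq_norm, normSq_mk]
  ring

lemma norm_R_I_mul_le_one {y : ℝ} (hy : y ^ 2 ≤ 8) : ‖R (I * y)‖ ≤ 1 := by
  have hsq : ‖R (I * y)‖ ^ 2 ≤ 1 ^ 2 := by
    rw [sq_norm_R_I_mul]
    nlinarith [pow_two_nonneg (y ^ 3)]
  exact pow_le_pow_iff_left₀ (norm_nonneg _) zero_le_one two_ne_zero |>.mp hsq

lemma norm_R_I_mul_lt_one {y : ℝ} (hy0 : y ≠ 0) (hy : y ^ 2 < 8) : ‖R (I * y)‖ < 1 := by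
  have hy6 : 0 < y ^ 6 := by positivity
  have hsq : ‖R (I * y)‖ ^ 2 < 1 ^ 2 := by
    rw [sq_norm_R_I_mul]
    nlinarith
  exact pow_lt_pow_iff_left₀ (norm_nonneg _) zero_le_one two_ne_zero |>.mp hsq

lemma sq_mul_laplacian_eigenvalue_lt {r θ : ℝ} (hr0 : 0 ≤ r) (hr : r < √8 / 4) :
    (r * (-2 + 2 * Real.cos θ)) ^ 2 < 8 := by
  have hr2 : r ^ 2 < 1 / 2 := by
    have h8 : √8 ^ 2 = 8 := Real.sq_sqrt (by norm_num)
    nlinarith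
  have hlap : (-2 + 2 * Real.cos θ) ^ 2 ≤ 16 := by
    nlinarith [Real.cos_le_one θ, Real.neg_one_le_cos θ]
  calc (r * (-2 + 2 * Real.cos θ)) ^ 2 = r ^ 2 * (-2 + 2 * Real.cos θ) ^ 2 := by ring
    _ ≤ r ^ 2 * 16 := by gcongr
    _ < 8 := by linarith

theorem rk4_cd2_periodic_stable_general (a h k : ℝ) (ha : 0 < a) (hh : 0 < h) (hk : 0 < k)
    (hbound : k < Real.sqrt 8 / 4 * (h ^ 2 / a)) (N : ℕ) :
    ∀ j : Fin N,
      ‖R (Complex.I *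
          ((k * (a / h ^ 2) * (-2 + 2 * Real.cos (2 * Real.pi * (j : ℕ) / N)) : ℝ) : ℂ))‖ ≤ 1 ∧
      (Real.cos (2 * Real.pi * (j : ℕ) / N) ≠ 1 →
        ‖R (Complex.I *
          ((k * (a / h ^ 2) * (-2 + 2 * Real.cos (2 * Real.pi * (j : ℕ) / N)) : ℝ) : ℂ))‖ < 1) := by
  intro j
  have hratio_pos : 0 < k * (a / h ^ 2) := by positivity
  have hratio : k * (a / h ^ 2) < √8 / 4 := by
    calc k * (a / h ^ 2) < √8 / 4 * (h ^ 2 / a) * (a / h ^ 2) := by gcongr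
      _ = √8 / 4 := by field_simp
  have hy := sq_mul_laplacian_eigenvalue_lt (θ := 2 * Real.pi * (j : ℕ) / N)
    hratio_pos.le hratio
  refine ⟨norm_R_I_mul_le_one hy.le, fun hcos => norm_R_I_mul_lt_one ?_ hy⟩
  refine mul_ne_zero hratio_pos.ne' fun hlap => hcos ?_
  linarith

/-- Linearized stability of RK4 with second-order central differencing and
periodic boundary conditions for the 1D linear Schrödinger equation: if
`k < (√8/4)·(h²/a)` then `|R(i·k·(a/h²)·(−2 + 2·cos(2πj/N)))| ≤ 1` for every
eigenvalue index `j`, strictly whenever `cos(2πj/N) ≠ 1`. -/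
theorem rk4_cd2_periodic_stable (a h k : ℝ) (ha : 0 < a) (hh : 0 < h) (hk : 0 < k)
    (hbound : k < Real.sqrt 8 / 4 * (h ^ 2 / a)) (N : ℕ) (hN : 1 ≤ N) :
    ∀ j : Fin N,
      ‖R (Complex.I *
          ((k * (a / h ^ 2) * (-2 + 2 * Real.cos (2 * Real.pi * (j : ℕ) / N)) : ℝ) : ℂ))‖ ≤ 1 ∧
      (Real.cos (2 * Real.pi * (j : ℕ) / N) ≠ 1 →
        ‖R (Complex.I *
          ((k * (a / h ^ 2) * (-2 + 2 * Real.cos (2 * Real.pi * (j : ℕ) / N)) : ℝ) : ℂ))‖ < 1) :=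
  rk4_cd2_periodic_stable_general a h k ha hh hk hbound N
end
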